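/- Let m ≤ n with m even, n odd, and suppose f is an SEDF of K_{m,n} with bipartition (X, Y), |X| = m, |Y| = n, such that some vertex u ∈ X has s_u ≤ 1. Then Σ_{e ∈ E(K_{m,n})} f(e) ≥ n + 1. -/

import Mathlib

/-!
Fix `u ∈ X` with `s_u ≤ 1`. Since `n` is odd and `m` even, `s_u` is odd and every `s_y` is
even. The closed neighbourhood of the edge `uy` sums to `s_u + s_y - f(uy) ≥ 1`; this number is
even, so it is at least `2`, i.e. `s_y ≥ 2 - s_u + f(uy)`. Summing over `y ∈ Y` gives
`Σ f = Σ_y s_y ≥ n (2 - s_u) + s_u = n + 1 + (n - 1)(1 - s_u) ≥ n + 1`.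
-/

open scoped Classical

noncomputable def edgeFin {V : Type*} [Fintype V] (G : SimpleGraph V) : Finset (Sym2 V) :=
  Finset.univ.filter (· ∈ G.edgeSet)

noncomputable def closedNbhd {V : Type*} [Fintype V] (G : SimpleGraph V) (e : Sym2 V) :
    Finset (Sym2 V) :=
  (edgeFin G).filter (fun e' => ∃ v, v ∈ e ∧ v ∈ e')

def IsSEDF {V : Type*} [Fintype V] (G : SimpleGraph V) (f : Sym2 V → ℤ) : Prop :=
  (∀ e ∈ edgeFin G, f e = 1 ∨ f e = -1) ∧
  ∀ e ∈ edgeFin G, 1 ≤ ∑ e' ∈ closedNbhd G e, f e'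

noncomputable def vsum {V : Type*} [Fintype V] (G : SimpleGraph V) (f : Sym2 V → ℤ) (v : V) : ℤ :=
  ∑ e ∈ (edgeFin G).filter (fun e => v ∈ e), f e

noncomputable def gammaS {V : Type*} [Fintype V] (G : SimpleGraph V) : ℤ :=
  sInf {z : ℤ | ∃ f, IsSEDF G f ∧ z = ∑ e ∈ edgeFin G, f e}

def IsLGraph {V : Type*} [Fintype V] (m n : ℕ) (G : SimpleGraph V) : Prop :=
  Fintype.card V = (n + 1) * (m * n + m + 1) ∧
  ∃ P : Fin (n + 1) → Finset V,
    (∀ v : V, ∃! i, v ∈ P i) ∧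
    (∀ i, (P i).card = m * n + m + 1) ∧
    (∀ u ∈ P 0, ∀ v ∈ P 0, u ≠ v → G.Adj u v) ∧
    (∀ i, i ≠ 0 → ∀ u ∈ P i, ∀ v ∈ P i, ¬ G.Adj u v) ∧
    (∀ i, i ≠ 0 → ∀ v ∈ P i, ((P 0).filter (G.Adj v)).card = m) ∧
    (∀ i, i ≠ 0 → ∀ v ∈ P 0, ((P i).filter (G.Adj v)).card = m) ∧
    (∀ i j, i ≠ 0 → j ≠ 0 → i ≠ j → ∀ u ∈ P i, ∀ v ∈ P j, ¬ G.Adj u v)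

def MConnected {V : Type*} [Fintype V] (m : ℕ) (G : SimpleGraph V) : Prop :=
  m < Fintype.card V ∧
  ∀ S : Finset V, S.card < m → (G.induce ((↑S : Set V)ᶜ)).Connected

def IsElementary {V : Type*} (H : SimpleGraph V) : Prop :=
  (∀ v, (H.neighborSet v).ncard ≤ 2) ∧
  ∀ v, (H.neighborSet v).ncard = 1 → ∀ w, H.Adj v w → (H.neighborSet w).ncard = 1

open Finset

theorem even_sum_iff_even_card_of_eq_one_or_neg_one {ι : Type*} {s : Finset ι} {g : ι → ℤ}
    (hg : ∀ i ∈ s, g i = 1 ∨ g i = -1) : Even (∑ i ∈ s, g i) ↔ Even s.card := by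
  induction s using Finset.induction_on with
  | empty => simp
  | insert a s ha ih =>
    have hodd : ¬Even (g a) := by rcases hg a (mem_insert_self a s) with h | h <;> simp [h]
    rw [sum_insert ha, card_insert_of_notMem ha, Int.even_add,
      ih fun i hi => hg i (mem_insert_of_mem hi), Nat.even_add_one]
    tauto

section CompleteBipartite

variable {α β : Type*}

def crossEdge (α β : Type*) : α × β ↪ Sym2 (α ⊕ β) where
  toFun p := s(Sum.inl p.1, Sum.inr p.2)
  inj' := by
    rintro ⟨a, b⟩ ⟨a', b'⟩ h
    simpa using h

@[simp]
theorem crossEdge_apply (p : α × β) : crossEdge α β p = s(Sum.inl p.1, Sum.inr p.2) := rfl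

@[simp]
theorem inl_mem_crossEdge (a : α) (p : α × β) : Sum.inl a ∈ crossEdge α β p ↔ p.1 = a := by
  simp [eq_comm]

@[simp]
theorem inr_mem_crossEdge (b : β) (p : α × β) : Sum.inr b ∈ crossEdge α β p ↔ p.2 = b := by
  simp [eq_comm]

theorem exists_mem_crossEdge_and_mem_crossEdge_iff (p q : α × β) :
    (∃ v, v ∈ crossEdge α β p ∧ v ∈ crossEdge α β q) ↔ q.1 = p.1 ∨ q.2 = p.2 := by
  simp [Sym2.mem_iff, eq_comm]

variable [Fintype α] [Fintype β]

theorem edgeFin_completeBipartiteGraph :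
    edgeFin (completeBipartiteGraph α β) = univ.map (crossEdge α β) := by
  ext e
  induction e using Sym2.ind with
  | _ v w => rcases v with a | b <;> rcases w with a' | b' <;> simp [edgeFin, Sym2.eq_swap]

theorem sum_filter_edgeFin_completeBipartiteGraph (f : Sym2 (α ⊕ β) → ℤ)
    (P : Sym2 (α ⊕ β) → Prop) [DecidablePred P] :
    ∑ e ∈ (edgeFin (completeBipartiteGraph α β)).filter P, f e
      = ∑ p with P (crossEdge α β p), f (crossEdge α β p) := by
  rw [edgeFin_completeBipartiteGraph, filter_map, sum_map]
  rfl

theorem sum_edgeFin_completeBipartiteGraph (f : Sym2 (α ⊕ β) → ℤ) :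
    ∑ e ∈ edgeFin (completeBipartiteGraph α β), f e = ∑ p, f (crossEdge α β p) := by
  rw [edgeFin_completeBipartiteGraph, sum_map]

theorem vsum_completeBipartiteGraph_inl (f : Sym2 (α ⊕ β) → ℤ) (a : α) :
    vsum (completeBipartiteGraph α β) f (Sum.inl a) = ∑ b, f (crossEdge α β (a, b)) := by
  rw [vsum, sum_filter_edgeFin_completeBipartiteGraph, sum_filter, Fintype.sum_prod_type]
  simp

theorem vsum_completeBipartiteGraph_inr (f : Sym2 (α ⊕ β) → ℤ) (b : β) :
    vsum (completeBipartiteGraph α β) f (Sum.inr b) = ∑ a, f (crossEdge α β (a, b)) := by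
  rw [vsum, sum_filter_edgeFin_completeBipartiteGraph, sum_filter, Fintype.sum_prod_type_right]
  simp

theorem sum_closedNbhd_crossEdge (f : Sym2 (α ⊕ β) → ℤ) (p : α × β) :
    ∑ e ∈ closedNbhd (completeBipartiteGraph α β) (crossEdge α β p), f e
      = vsum (completeBipartiteGraph α β) f (Sum.inl p.1)
        + vsum (completeBipartiteGraph α β) f (Sum.inr p.2) - f (crossEdge α β p) := by
  have hinter : (univ.filter (·.1 = p.1) ∩ univ.filter (·.2 = p.2) : Finset (α × β)) = {p} := by
    ext q
    simp [Prod.ext_iff]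
  rw [eq_sub_iff_add_eq, closedNbhd, sum_filter_edgeFin_completeBipartiteGraph]
  simp only [exists_mem_crossEdge_and_mem_crossEdge_iff, filter_or]
  rw [← sum_singleton (fun q => f (crossEdge α β q)) p, ← hinter, sum_union_inter]
  simp [vsum_completeBipartiteGraph_inl, vsum_completeBipartiteGraph_inr, sum_filter,
    Fintype.sum_prod_type]

theorem crossEdge_mem_edgeFin (p : α × β) :
    crossEdge α β p ∈ edgeFin (completeBipartiteGraph α β) := by
  simp [edgeFin_completeBipartiteGraph]

namespace IsSEDF

variable {f : Sym2 (α ⊕ β) → ℤ}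

theorem even_vsum_inl_iff (hf : IsSEDF (completeBipartiteGraph α β) f) (a : α) :
    Even (vsum (completeBipartiteGraph α β) f (Sum.inl a)) ↔ Even (Fintype.card β) := by
  rw [vsum_completeBipartiteGraph_inl,
    even_sum_iff_even_card_of_eq_one_or_neg_one fun b _ => hf.1 _ (crossEdge_mem_edgeFin _),
    card_univ]

theorem even_vsum_inr_iff (hf : IsSEDF (completeBipartiteGraph α β) f) (b : β) :
    Even (vsum (completeBipartiteGraph α β) f (Sum.inr b)) ↔ Even (Fintype.card α) := by
  rw [vsum_completeBipartiteGraph_inr,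
    even_sum_iff_even_card_of_eq_one_or_neg_one fun a _ => hf.1 _ (crossEdge_mem_edgeFin _),
    card_univ]

theorem two_sub_vsum_inl_add_le_vsum_inr (hf : IsSEDF (completeBipartiteGraph α β) f)
    (hα : Even (Fintype.card α)) (hβ : Odd (Fintype.card β)) (p : α × β) :
    2 - vsum (completeBipartiteGraph α β) f (Sum.inl p.1) + f (crossEdge α β p)
      ≤ vsum (completeBipartiteGraph α β) f (Sum.inr p.2) := by
  have hclosed := hf.2 _ (crossEdge_mem_edgeFin p)
  rw [sum_closedNbhd_crossEdge] at hclosed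
  obtain ⟨k, hk⟩ := Int.not_even_iff_odd.mp
    ((hf.even_vsum_inl_iff p.1).not.mpr (Nat.not_even_iff_odd.mpr hβ))
  obtain ⟨l, hl⟩ := (hf.even_vsum_inr_iff p.2).mpr hα
  rcases hf.1 _ (crossEdge_mem_edgeFin p) with h | h <;> omega

theorem card_add_one_le_sum_edgeFin (hf : IsSEDF (completeBipartiteGraph α β) f)
    (hα : Even (Fintype.card α)) (hβ : Odd (Fintype.card β))
    (a : α) (ha : vsum (completeBipartiteGraph α β) f (Sum.inl a) ≤ 1) :
    (Fintype.card β : ℤ) + 1 ≤ ∑ e ∈ edgeFin (completeBipartiteGraph α β), f e := by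
  set s := vsum (completeBipartiteGraph α β) f (Sum.inl a) with hs
  have hβpos : (1 : ℤ) ≤ Fintype.card β := by exact_mod_cast hβ.pos
  calc (Fintype.card β : ℤ) + 1
      ≤ Fintype.card β * (2 - s) + s := by nlinarith
    _ = ∑ b, (2 - s + f (crossEdge α β (a, b))) := by
      rw [sum_add_distrib, ← vsum_completeBipartiteGraph_inl, ← hs, sum_const, card_univ,
        nsmul_eq_mul]
    _ ≤ ∑ b, vsum (completeBipartiteGraph α β) f (Sum.inr b) :=
      sum_le_sum fun b _ => hf.two_sub_vsum_inl_add_le_vsum_inr hα hβ (a, b)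
    _ = ∑ e ∈ edgeFin (completeBipartiteGraph α β), f e := by
      rw [sum_edgeFin_completeBipartiteGraph, Fintype.sum_prod_type_right]
      simp only [vsum_completeBipartiteGraph_inr]

end IsSEDF

end CompleteBipartite

theorem stmt18_general (m n : ℕ) (hm : Even m) (hn : Odd n)
    (f : Sym2 (Fin m ⊕ Fin n) → ℤ)
    (hf : IsSEDF (completeBipartiteGraph (Fin m) (Fin n)) f)
    (u : Fin m) (hu : vsum (completeBipartiteGraph (Fin m) (Fin n)) f (Sum.inl u) ≤ 1) :
    (n : ℤ) + 1 ≤ ∑ e ∈ edgeFin (completeBipartiteGraph (Fin m) (Fin n)), f e := by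
  simpa using hf.card_add_one_le_sum_edgeFin (by simpa using hm) (by simpa using hn) u hu

theorem stmt18 (m n : ℕ) (hmn : m ≤ n) (hm : Even m) (hn : Odd n)
    (f : Sym2 (Fin m ⊕ Fin n) → ℤ)
    (hf : IsSEDF (completeBipartiteGraph (Fin m) (Fin n)) f)
    (u : Fin m) (hu : vsum (completeBipartiteGraph (Fin m) (Fin n)) f (Sum.inl u) ≤ 1) :
    (n : ℤ) + 1 ≤ ∑ e ∈ edgeFin (completeBipartiteGraph (Fin m) (Fin n)), f e :=
  stmt18_general m n hm hn f hf u hu
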